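/- arXiv:2602.04694 — 2 statements merged into one kernel-verified Lean document; each statement's English description precedes it below -/
import Mathlib

section
/- For all nodes u in {0,...,n} of G and v in {0,...,m} of H, the dynamic-programming table value A_{u,v} equals the maximum of the score s(p) over all valid partial matchings p up to (u,v); that is, A_{u,v} = max_{p ∈ P_{u,v}} s(p). -/
/-- `a` is the parent of `b` (and `b` is not the root `0`). -/
def ChildRel {n : ℕ} (anc : Fin (n+1) → Fin (n+1)) (a b : Fin (n+1)) : Prop :=
  b ≠ 0 ∧ anc b = a

/-- `u <_T v`: `u` is a proper ancestor of `v`. -/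
def TreeLt {n : ℕ} (anc : Fin (n+1) → Fin (n+1)) : Fin (n+1) → Fin (n+1) → Prop :=
  Relation.TransGen (ChildRel anc)

/-- `u ≤_T v`: reflexive closure of the proper-ancestor relation. -/
def TreeLe {n : ℕ} (anc : Fin (n+1) → Fin (n+1)) : Fin (n+1) → Fin (n+1) → Prop :=
  Relation.ReflTransGen (ChildRel anc)

/-- A valid matching between the trees given by `ancG` and `ancH`. -/
def ValidMatching {n m : ℕ} (ancG : Fin (n+1) → Fin (n+1)) (ancH : Fin (m+1) → Fin (m+1))
    (p : List (Fin (n+1) × Fin (m+1))) : Prop :=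
  List.Chain' (fun x y => TreeLt ancG x.1 y.1 ∧ TreeLt ancH x.2 y.2) p

/-- A valid partial matching up to `(u, v)`. -/
def PartialUpTo {n m : ℕ} (ancG : Fin (n+1) → Fin (n+1)) (ancH : Fin (m+1) → Fin (m+1))
    (p : List (Fin (n+1) × Fin (m+1))) (u : Fin (n+1)) (v : Fin (m+1)) : Prop :=
  ValidMatching ancG ancH p ∧ ∀ q ∈ p.getLast?, TreeLe ancG q.1 u ∧ TreeLe ancH q.2 v

/-- A valid partial matching up to a pair of extended (possibly virtual `-1 = none`) nodes:
the only valid partial matching up to a pair with a virtual coordinate is the empty matching. -/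
def PartialUpToO {n m : ℕ} (ancG : Fin (n+1) → Fin (n+1)) (ancH : Fin (m+1) → Fin (m+1))
    (p : List (Fin (n+1) × Fin (m+1)))
    (u? : Option (Fin (n+1))) (v? : Option (Fin (m+1))) : Prop :=
  match u?, v? with
  | some u, some v => PartialUpTo ancG ancH p u v
  | _, _ => p = []

/-- Extended ancestor function: the parent of the root `0` is the virtual node `none` (i.e. `-1`). -/
def ancO {n : ℕ} (anc : Fin (n+1) → Fin (n+1)) (u : Fin (n+1)) : Option (Fin (n+1)) :=
  if u = 0 then none else some (anc u)

/-- The score of a matching. -/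
def score {n m : ℕ} {S : Type*} (w : S → S → ℝ)
    (φG : Fin (n+1) → S) (φH : Fin (m+1) → S)
    (p : List (Fin (n+1) × Fin (m+1))) : ℝ :=
  (p.map (fun q => w (φG q.1) (φH q.2))).sum

/-!
Classify a valid partial matching up to `(u, v)` by its last pair `a`, which satisfies
`a.1 ≤_G u` and `a.2 ≤_H v`: either `a.1 <_G u`, or `a.2 <_H v`, or `a = (u, v)`, and in the last case
the rest of the matching lies strictly below `(u, v)`. The set of scores up to `(u, v)` is therefore
the union of the score sets up to `(anc u, v)` and `(u, anc v)` and the translate by `w (φG u) (φH v)` of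
the score set up to `(anc u, anc v)`; since the empty matching lies in the first of these, the
recursion for `A` computes exactly the maximum of this union.
-/

section Tree

variable {k : ℕ} (anc : Fin (k+1) → Fin (k+1))

theorem treeLt_iff_treeLe_anc {a b : Fin (k+1)} :
    TreeLt anc a b ↔ b ≠ 0 ∧ TreeLe anc a (anc b) := by
  refine Relation.TransGen.tail'_iff.trans ⟨?_, fun ⟨hb, h⟩ => ⟨_, h, hb, rfl⟩⟩
  rintro ⟨c, hc, hb, rfl⟩
  exact ⟨hb, hc⟩

theorem treeLe_iff_eq_or_treeLt {a b : Fin (k+1)} : TreeLe anc a b ↔ b = a ∨ TreeLt anc a b :=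
  Relation.reflTransGen_iff_eq_or_transGen

theorem exists_mem_ancO_treeLe_iff {a u : Fin (k+1)} :
    (∃ u' ∈ ancO anc u, TreeLe anc a u') ↔ TreeLt anc a u := by
  rw [treeLt_iff_treeLe_anc]
  by_cases hu : u = 0 <;> simp [ancO, hu]

end Tree

section Matching

variable {n m : ℕ} {ancG : Fin (n+1) → Fin (n+1)} {ancH : Fin (m+1) → Fin (m+1)}

theorem validMatching_iff_isChain {p : List (Fin (n+1) × Fin (m+1))} :
    ValidMatching ancG ancH p ↔
      p.IsChain (fun x y => TreeLt ancG x.1 y.1 ∧ TreeLt ancH x.2 y.2) :=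
  Iff.rfl

theorem validMatching_append_singleton_iff {q : List (Fin (n+1) × Fin (m+1))}
    {a : Fin (n+1) × Fin (m+1)} :
    ValidMatching ancG ancH (q ++ [a]) ↔
      ValidMatching ancG ancH q ∧ ∀ x ∈ q.getLast?, TreeLt ancG x.1 a.1 ∧ TreeLt ancH x.2 a.2 := by
  simp [validMatching_iff_isChain, List.isChain_append]

theorem partialUpToO_iff {p : List (Fin (n+1) × Fin (m+1))} {u? : Option (Fin (n+1))}
    {v? : Option (Fin (m+1))} :
    PartialUpToO ancG ancH p u? v? ↔ ValidMatching ancG ancH p ∧ ∀ x ∈ p.getLast?,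
      (∃ u ∈ u?, TreeLe ancG x.1 u) ∧ (∃ v ∈ v?, TreeLe ancH x.2 v) := by
  rcases List.eq_nil_or_concat p with rfl | ⟨q, a, rfl⟩ <;> rcases u? with _ | u <;>
    rcases v? with _ | v <;> simp [PartialUpToO, PartialUpTo, validMatching_iff_isChain]

theorem partialUpToO_ancO_ancO_iff {q : List (Fin (n+1) × Fin (m+1))} {u : Fin (n+1)}
    {v : Fin (m+1)} :
    PartialUpToO ancG ancH q (ancO ancG u) (ancO ancH v) ↔
      ValidMatching ancG ancH (q ++ [(u, v)]) := by
  simp only [partialUpToO_iff, exists_mem_ancO_treeLe_iff, validMatching_append_singleton_iff]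

theorem partialUpTo_iff_ancO {p : List (Fin (n+1) × Fin (m+1))} {u : Fin (n+1)}
    {v : Fin (m+1)} :
    PartialUpTo ancG ancH p u v ↔
      PartialUpToO ancG ancH p (ancO ancG u) (some v) ∨
      PartialUpToO ancG ancH p (some u) (ancO ancH v) ∨
      ∃ q, PartialUpToO ancG ancH q (ancO ancG u) (ancO ancH v) ∧ q ++ [(u, v)] = p := by
  simp only [partialUpToO_ancO_ancO_iff]
  rw [partialUpToO_iff, partialUpToO_iff]
  simp only [exists_mem_ancO_treeLe_iff, Option.mem_some_iff]
  rcases List.eq_nil_or_concat p with rfl | ⟨q, ⟨a, b⟩, rfl⟩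
  · simp [PartialUpTo, validMatching_iff_isChain]
  simp only [PartialUpTo, List.concat_eq_append, List.getLast?_append, List.getLast?_singleton,
    Option.some_or, Option.mem_def, Option.some.injEq, treeLe_iff_eq_or_treeLt, forall_eq',
    existsAndEq, true_and, List.append_singleton_inj, Prod.mk.injEq]
  by_cases hu : u = a <;> by_cases hv : v = b <;> subst_vars <;> tauto

end Matching

def extRank {k : ℕ} : Option (Fin k) → ℕ
  | none => 0
  | some u => u.val + 1

theorem extRank_ancO_lt {k : ℕ} {anc : Fin (k+1) → Fin (k+1)}
    (hanc : ∀ v : Fin (k+1), v ≠ 0 → anc v < v) (u : Fin (k+1)) :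
    extRank (ancO anc u) < extRank (some u) := by
  by_cases hu : u = 0
  · simp [ancO, hu, extRank]
  · simpa [ancO, hu, extRank] using hanc u hu

section Score

variable {n m : ℕ} {S : Type*} (ancG : Fin (n+1) → Fin (n+1)) (ancH : Fin (m+1) → Fin (m+1))
  (w : S → S → ℝ) (φG : Fin (n+1) → S) (φH : Fin (m+1) → S)

theorem score_append_singleton (q : List (Fin (n+1) × Fin (m+1))) (a : Fin (n+1) × Fin (m+1)) :
    score w φG φH (q ++ [a]) = score w φG φH q + w (φG a.1) (φH a.2) := by
  simp [score]

def partialScores (u? : Option (Fin (n+1))) (v? : Option (Fin (m+1))) : Set ℝ :=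
  score w φG φH '' {p | PartialUpToO ancG ancH p u? v?}

theorem partialScores_none_left (v? : Option (Fin (m+1))) :
    partialScores ancG ancH w φG φH none v? = {0} := by
  simp [partialScores, PartialUpToO, score]

theorem partialScores_none_right (u? : Option (Fin (n+1))) :
    partialScores ancG ancH w φG φH u? none = {0} := by
  rcases u? with _ | u <;> simp [partialScores, PartialUpToO, score]

theorem partialScores_some_some (u : Fin (n+1)) (v : Fin (m+1)) :
    partialScores ancG ancH w φG φH (some u) (some v) =
      partialScores ancG ancH w φG φH (ancO ancG u) (some v) ∪
        partialScores ancG ancH w φG φH (some u) (ancO ancH v) ∪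
        (w (φG u) (φH v) + ·) '' partialScores ancG ancH w φG φH (ancO ancG u) (ancO ancH v) := by
  have hsplit : {p | PartialUpToO ancG ancH p (some u) (some v)} =
      {p | PartialUpToO ancG ancH p (ancO ancG u) (some v)} ∪
        {p | PartialUpToO ancG ancH p (some u) (ancO ancH v)} ∪
        (· ++ [(u, v)]) '' {q | PartialUpToO ancG ancH q (ancO ancG u) (ancO ancH v)} := by
    ext p
    simp only [Set.mem_union, Set.mem_image, or_assoc]
    exact partialUpTo_iff_ancO
  simp only [partialScores, hsplit, Set.image_union, Set.image_image, score_append_singleton,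
    add_comm]

variable {ancG ancH w φG φH}

theorem isGreatest_partialScores (hG : ∀ v : Fin (n+1), v ≠ 0 → ancG v < v)
    (hH : ∀ v : Fin (m+1), v ≠ 0 → ancH v < v) (A : Option (Fin (n+1)) → Option (Fin (m+1)) → ℝ)
    (hAbase1 : ∀ v? : Option (Fin (m+1)), A none v? = 0)
    (hAbase2 : ∀ u? : Option (Fin (n+1)), A u? none = 0)
    (hArec : ∀ (u : Fin (n+1)) (v : Fin (m+1)),
      A (some u) (some v) =
        max (max (A (ancO ancG u) (some v)) (A (some u) (ancO ancH v)))
          (w (φG u) (φH v) + A (ancO ancG u) (ancO ancH v))) :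
    ∀ u? v?, IsGreatest (partialScores ancG ancH w φG φH u? v?) (A u? v?)
  | none, v? => by
    rw [hAbase1, partialScores_none_left]
    exact isGreatest_singleton
  | some u, none => by
    rw [hAbase2, partialScores_none_right]
    exact isGreatest_singleton
  | some u, some v => by
    have hG_lt := extRank_ancO_lt hG u
    have hH_lt := extRank_ancO_lt hH v
    have h₁ := isGreatest_partialScores hG hH A hAbase1 hAbase2 hArec (ancO ancG u) (some v)
    have h₂ := isGreatest_partialScores hG hH A hAbase1 hAbase2 hArec (some u) (ancO ancH v)
    have h₃ := isGreatest_partialScores hG hH A hAbase1 hAbase2 hArec (ancO ancG u) (ancO ancH v)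
    rw [hArec, partialScores_some_some]
    exact (h₁.union h₂).union ((monotone_id.const_add _).map_isGreatest h₃)
termination_by u? v? => extRank u? + extRank v?
decreasing_by all_goals omega

end Score

theorem dp_table_eq_max_partial_score_general
    (n m : ℕ) (ancG : Fin (n+1) → Fin (n+1)) (ancH : Fin (m+1) → Fin (m+1))
    (hG : ∀ v : Fin (n+1), v ≠ 0 → ancG v < v)
    (hH : ∀ v : Fin (m+1), v ≠ 0 → ancH v < v)
    {S : Type*} (φG : Fin (n+1) → S) (φH : Fin (m+1) → S)
    (w : S → S → ℝ)
    (A : Option (Fin (n+1)) → Option (Fin (m+1)) → ℝ)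
    (hAbase1 : ∀ v? : Option (Fin (m+1)), A none v? = 0)
    (hAbase2 : ∀ u? : Option (Fin (n+1)), A u? none = 0)
    (hArec : ∀ (u : Fin (n+1)) (v : Fin (m+1)),
      A (some u) (some v) =
        max (max (A (ancO ancG u) (some v)) (A (some u) (ancO ancH v)))
          (w (φG u) (φH v) + A (ancO ancG u) (ancO ancH v)))
    (u : Fin (n+1)) (v : Fin (m+1)) :
    IsGreatest {x : ℝ | ∃ p : List (Fin (n+1) × Fin (m+1)),
        PartialUpTo ancG ancH p u v ∧ score w φG φH p = x}
      (A (some u) (some v)) :=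
  isGreatest_partialScores hG hH A hAbase1 hAbase2 hArec (some u) (some v)

/-- **Score Correctness of the DP table.**
For all nodes `u` of `G` and `v` of `H`, the dynamic-programming table value `A (some u) (some v)`
equals the maximum of the score `s(p)` over all valid partial matchings `p` up to `(u, v)`. -/
theorem dp_table_eq_max_partial_score
    (n m : ℕ) (ancG : Fin (n+1) → Fin (n+1)) (ancH : Fin (m+1) → Fin (m+1))
    (hG : ∀ v : Fin (n+1), v ≠ 0 → ancG v < v)
    (hH : ∀ v : Fin (m+1), v ≠ 0 → ancH v < v)
    {S : Type*} (φG : Fin (n+1) → S) (φH : Fin (m+1) → S)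
    (w : S → S → ℝ) (hw : ∀ a b : S, 0 ≤ w a b)
    (A : Option (Fin (n+1)) → Option (Fin (m+1)) → ℝ)
    (hAbase1 : ∀ v? : Option (Fin (m+1)), A none v? = 0)
    (hAbase2 : ∀ u? : Option (Fin (n+1)), A u? none = 0)
    (hArec : ∀ (u : Fin (n+1)) (v : Fin (m+1)),
      A (some u) (some v) =
        max (max (A (ancO ancG u) (some v)) (A (some u) (ancO ancH v)))
          (w (φG u) (φH v) + A (ancO ancG u) (ancO ancH v)))
    (u : Fin (n+1)) (v : Fin (m+1)) :
    IsGreatest {x : ℝ | ∃ p : List (Fin (n+1) × Fin (m+1)),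
        PartialUpTo ancG ancH p u v ∧ score w φG φH p = x}
      (A (some u) (some v)) :=
  dp_table_eq_max_partial_score_general n m ancG ancH hG hH φG φH w A hAbase1 hAbase2 hArec u v
end

section
/- Fix nodes u ∈ {0,...,n} of G and v ∈ {0,...,m} of H. Every valid partial matching q up to (u,v) satisfies at least one of the following: (1) q is a valid partial matching up to (anc_G(u), v); (2) q is a valid partial matching up to (u, anc_H(v)); (3) q is nonempty, its last pair equals (u,v), and the sequence obtained from q by deleting its last pair is a valid partial matching up to (anc_G(u), anc_H(v)). Here, if u = 0 then anc_G(u) is the virtual node −1 and a valid partial matching up to (−1, v) is by convention the empty matching only, and similarly for anc_H. -/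
lemma TreeLe.eq_or_treeLt {k : ℕ} {anc : Fin (k+1) → Fin (k+1)} {a u : Fin (k+1)}
    (h : TreeLe anc a u) : a = u ∨ TreeLt anc a u :=
  (Relation.reflTransGen_iff_eq_or_transGen.1 h).imp Eq.symm id

lemma TreeLt.exists_mem_ancO {k : ℕ} {anc : Fin (k+1) → Fin (k+1)} {a u : Fin (k+1)}
    (h : TreeLt anc a u) : ∃ w ∈ ancO anc u, TreeLe anc a w := by
  obtain ⟨c, hac, hu0, rfl⟩ := Relation.TransGen.tail'_iff.1 h
  exact ⟨anc u, by simp [ancO, hu0], hac⟩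

lemma partialUpToO_of_getLast? {n m : ℕ} {ancG : Fin (n+1) → Fin (n+1)}
    {ancH : Fin (m+1) → Fin (m+1)} {p : List (Fin (n+1) × Fin (m+1))}
    {u? : Option (Fin (n+1))} {v? : Option (Fin (m+1))} (hp : ValidMatching ancG ancH p)
    (hlast : ∀ x ∈ p.getLast?, (∃ u ∈ u?, TreeLe ancG x.1 u) ∧ ∃ v ∈ v?, TreeLe ancH x.2 v) :
    PartialUpToO ancG ancH p u? v? := by
  have hnil (hvirtual : u? = none ∨ v? = none) : p = [] :=
    List.getLast?_eq_none_iff.1 <| Option.eq_none_iff_forall_not_mem.2 fun x hx => by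
      rcases hvirtual with rfl | rfl <;> simpa using hlast x hx
  rcases u? with _ | u <;> rcases v? with _ | v <;> simp only [PartialUpToO]
  any_goals exact hnil (by simp)
  exact ⟨hp, fun x hx => by simpa using hlast x hx⟩

lemma ValidMatching.getLast?_dropLast_lt {n m : ℕ} {ancG : Fin (n+1) → Fin (n+1)}
    {ancH : Fin (m+1) → Fin (m+1)} {p : List (Fin (n+1) × Fin (m+1))}
    (hp : ValidMatching ancG ancH p) {x : Fin (n+1) × Fin (m+1)} (hx : p.getLast? = some x) :
    ∀ y ∈ p.dropLast.getLast?, TreeLt ancG y.1 x.1 ∧ TreeLt ancH y.2 x.2 := by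
  intro y hy
  have hne : p.dropLast ≠ [] := by rintro h; simp [h] at hy
  have := List.IsChain.rel_getLast_dropLast hp hne
  rw [List.getLast?_eq_some_getLast hne, Option.mem_some_iff] at hy
  rw [List.getLast?_eq_some_getLast (by grind), Option.some_inj] at hx
  rwa [← hy, ← hx]

theorem partial_matching_trichotomy_general
    (n m : ℕ) (ancG : Fin (n+1) → Fin (n+1)) (ancH : Fin (m+1) → Fin (m+1))
    (u : Fin (n+1)) (v : Fin (m+1))
    (q : List (Fin (n+1) × Fin (m+1)))
    (hq : PartialUpTo ancG ancH q u v) :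
    PartialUpToO ancG ancH q (ancO ancG u) (some v) ∨
    PartialUpToO ancG ancH q (some u) (ancO ancH v) ∨
    (q ≠ [] ∧ q.getLast? = some (u, v) ∧
      PartialUpToO ancG ancH q.dropLast (ancO ancG u) (ancO ancH v)) := by
  obtain ⟨hvm, hlast⟩ := hq
  rcases hx : q.getLast? with _ | ⟨a, b⟩
  · exact .inl (partialUpToO_of_getLast? hvm (by simp [hx]))
  obtain ⟨ha, hb⟩ := hlast (a, b) hx
  have hlast_eq : ∀ y ∈ q.getLast?, y = (a, b) := by simp [hx]
  rcases ha.eq_or_treeLt with rfl | hau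
  · rcases hb.eq_or_treeLt with rfl | hbv
    · refine .inr (.inr ⟨by rintro rfl; simp at hx, rfl, ?_⟩)
      refine partialUpToO_of_getLast? hvm.dropLast fun y hy => ?_
      obtain ⟨hlt₁, hlt₂⟩ := hvm.getLast?_dropLast_lt hx y hy
      exact ⟨hlt₁.exists_mem_ancO, hlt₂.exists_mem_ancO⟩
    · refine .inr (.inl (partialUpToO_of_getLast? hvm fun y hy => ?_))
      obtain rfl := hlast_eq y hy
      exact ⟨⟨_, rfl, ha⟩, hbv.exists_mem_ancO⟩
  · refine .inl (partialUpToO_of_getLast? hvm fun y hy => ?_)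
    obtain rfl := hlast_eq y hy
    exact ⟨hau.exists_mem_ancO, ⟨_, rfl, hb⟩⟩

/-- Every valid partial matching `q` up to `(u, v)` is (1) a valid partial
matching up to `(anc_G u, v)`, or (2) a valid partial matching up to `(u, anc_H v)`, or
(3) nonempty with last pair `(u, v)`, where deleting the last pair gives a valid partial
matching up to `(anc_G u, anc_H v)`.  Virtual coordinates (the parent `-1 = none` of a root)
admit only the empty matching. -/
theorem partial_matching_trichotomy
    (n m : ℕ) (ancG : Fin (n+1) → Fin (n+1)) (ancH : Fin (m+1) → Fin (m+1))
    (hG : ∀ v : Fin (n+1), v ≠ 0 → ancG v < v)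
    (hH : ∀ v : Fin (m+1), v ≠ 0 → ancH v < v)
    (u : Fin (n+1)) (v : Fin (m+1))
    (q : List (Fin (n+1) × Fin (m+1)))
    (hq : PartialUpTo ancG ancH q u v) :
    PartialUpToO ancG ancH q (ancO ancG u) (some v) ∨
    PartialUpToO ancG ancH q (some u) (ancO ancH v) ∨
    (q ≠ [] ∧ q.getLast? = some (u, v) ∧
      PartialUpToO ancG ancH q.dropLast (ancO ancG u) (ancO ancH v)) :=
  partial_matching_trichotomy_general n m ancG ancH u v q hq
end
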